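/- arXiv:2102.08363 — 9 statements merged into one kernel-verified Lean document; each statement's English description precedes it below -/
import Mathlib

section
/- (Interpolation Lemma, part 1: nonnegativity of the COMBO penalty.) Fix f ∈ [0,1] and assume d_f(x) > 0 for every x ∈ ι. Then ν(ρ, f) = Σ_x ρ(x)·(ρ(x) − d(x))/d_f(x) ≥ 0. -/
open Finset

lemma mul_sub_div_interpolate_eq {a b f : ℝ} (h : f * b + (1 - f) * a ≠ 0) :
    a * (a - b) / (f * b + (1 - f) * a) = (a - b) + f * (a - b) ^ 2 / (f * b + (1 - f) * a) := by
  rw [div_eq_iff h, add_mul, div_mul_cancel₀ _ h]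
  ring

lemma sub_le_mul_sub_div_interpolate {a b f : ℝ} (hf : 0 ≤ f) (h : 0 < f * b + (1 - f) * a) :
    a - b ≤ a * (a - b) / (f * b + (1 - f) * a) := by
  rw [mul_sub_div_interpolate_eq h.ne']
  have : 0 ≤ f * (a - b) ^ 2 / (f * b + (1 - f) * a) := by positivity
  linarith

theorem combo_penalty_nonneg_general {ι : Type*} [Fintype ι]
    (ρ d : ι → ℝ)
    (hρ1 : ∑ x, ρ x = 1) (hd1 : ∑ x, d x = 1)
    (f : ℝ) (hf0 : 0 ≤ f)
    (hdf : ∀ x, 0 < f * d x + (1 - f) * ρ x) :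
    0 ≤ ∑ x, ρ x * (ρ x - d x) / (f * d x + (1 - f) * ρ x) := by
  calc (0 : ℝ) = ∑ x, (ρ x - d x) := by rw [sum_sub_distrib, hρ1, hd1, sub_self]
    _ ≤ _ := sum_le_sum fun x _ => sub_le_mul_sub_div_interpolate hf0 (hdf x)

theorem combo_penalty_nonneg {ι : Type*} [Fintype ι] [Nonempty ι]
    (ρ d : ι → ℝ) (hρ0 : ∀ x, 0 ≤ ρ x) (hd0 : ∀ x, 0 ≤ d x)
    (hρ1 : ∑ x, ρ x = 1) (hd1 : ∑ x, d x = 1)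
    (f : ℝ) (hf0 : 0 ≤ f) (hf1 : f ≤ 1)
    (hdf : ∀ x, 0 < f * d x + (1 - f) * ρ x) :
    0 ≤ ∑ x, ρ x * (ρ x - d x) / (f * d x + (1 - f) * ρ x) :=
  combo_penalty_nonneg_general ρ d hρ1 hd1 f hf0 hdf
end

section
/- (Interpolation Lemma, part 2: monotonicity in f.) Assume ρ(x) > 0 and d(x) > 0 for every x ∈ ι. Then the function f ↦ ν(ρ, f) is monotone nondecreasing on [0,1]: for all 0 ≤ f₁ ≤ f₂ ≤ 1, ν(ρ, f₁) ≤ ν(ρ, f₂). -/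
lemma interpolate_pos {a b f : ℝ} (ha : 0 < a) (hb : 0 < b) (hf0 : 0 ≤ f) (hf1 : f ≤ 1) :
    0 < f * b + (1 - f) * a := by
  rcases eq_or_lt_of_le hf1 with rfl | hf1
  · simpa using hb
  · exact add_pos_of_nonneg_of_pos (mul_nonneg hf0 hb.le) (mul_pos (sub_pos.2 hf1) ha)

/-- With `t = a - b` the denominators are `a - f t`, and cross-multiplying leaves
`a t² (f₂ - f₁) ≥ 0`. -/
lemma penalty_term_monotone {a b f₁ f₂ : ℝ} (ha : 0 < a) (hb : 0 < b)
    (hf₁0 : 0 ≤ f₁) (hf₁₂ : f₁ ≤ f₂) (hf₂1 : f₂ ≤ 1) :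
    a * (a - b) / (f₁ * b + (1 - f₁) * a) ≤ a * (a - b) / (f₂ * b + (1 - f₂) * a) := by
  have hD₁ := interpolate_pos ha hb hf₁0 (hf₁₂.trans hf₂1)
  have hD₂ := interpolate_pos ha hb (hf₁0.trans hf₁₂) hf₂1
  rw [div_le_div_iff₀ hD₁ hD₂, ← sub_nonneg]
  have key : a * (a - b) * (f₁ * b + (1 - f₁) * a) - a * (a - b) * (f₂ * b + (1 - f₂) * a) =
      a * (a - b) ^ 2 * (f₂ - f₁) := by ring
  rw [key]
  exact mul_nonneg (by positivity) (sub_nonneg.2 hf₁₂)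

theorem combo_penalty_monotone_general {ι : Type*} [Fintype ι]
    (ρ d : ι → ℝ) (hρ0 : ∀ x, 0 < ρ x) (hd0 : ∀ x, 0 < d x)
    (f₁ f₂ : ℝ) (hf₁0 : 0 ≤ f₁) (hf₁₂ : f₁ ≤ f₂) (hf₂1 : f₂ ≤ 1) :
    ∑ x, ρ x * (ρ x - d x) / (f₁ * d x + (1 - f₁) * ρ x) ≤
      ∑ x, ρ x * (ρ x - d x) / (f₂ * d x + (1 - f₂) * ρ x) :=
  Finset.sum_le_sum fun x _ => penalty_term_monotone (hρ0 x) (hd0 x) hf₁0 hf₁₂ hf₂1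

theorem combo_penalty_monotone {ι : Type*} [Fintype ι] [Nonempty ι]
    (ρ d : ι → ℝ) (hρ0 : ∀ x, 0 < ρ x) (hd0 : ∀ x, 0 < d x)
    (hρ1 : ∑ x, ρ x = 1) (hd1 : ∑ x, d x = 1)
    (f₁ f₂ : ℝ) (hf₁0 : 0 ≤ f₁) (hf₁₂ : f₁ ≤ f₂) (hf₂1 : f₂ ≤ 1) :
    ∑ x, ρ x * (ρ x - d x) / (f₁ * d x + (1 - f₁) * ρ x) ≤
      ∑ x, ρ x * (ρ x - d x) / (f₂ * d x + (1 - f₂) * ρ x) :=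
  combo_penalty_monotone_general ρ d hρ0 hd0 f₁ f₂ hf₁0 hf₁₂ hf₂1
end

section
/- (Strict monotonicity of the penalty, from the proof of the Interpolation Lemma.) Assume ρ(x) > 0 and d(x) > 0 for every x ∈ ι, and assume ρ ≠ d. Then the function f ↦ ν(ρ, f) is strictly increasing on [0,1]: for all 0 ≤ f₁ < f₂ ≤ 1, ν(ρ, f₁) < ν(ρ, f₂). -/
/-!
Writing `D_x(f) = f d(x) + (1 - f) ρ(x)`, each summand of `ν(ρ, f)` satisfies
`ρ(ρ - d)/D(f₂) - ρ(ρ - d)/D(f₁) = ρ (ρ - d)² (f₂ - f₁) / (D(f₁) D(f₂))`,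
so it is nondecreasing in `f`, and strictly increasing wherever `ρ(x) ≠ d(x)`.
-/

open Finset Set

section PenaltyTerm

variable {a b f f₁ f₂ : ℝ}

lemma interpolation_pos (ha : 0 < a) (hb : 0 < b) (hf : f ∈ Icc (0 : ℝ) 1) :
    0 < f * b + (1 - f) * a := by
  simpa using convex_Ioi (0 : ℝ) (mem_Ioi.2 hb) (mem_Ioi.2 ha) hf.1 (sub_nonneg.2 hf.2)
    (by ring)

lemma penalty_term_sub (h₁ : f₁ * b + (1 - f₁) * a ≠ 0) (h₂ : f₂ * b + (1 - f₂) * a ≠ 0) :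
    a * (a - b) / (f₂ * b + (1 - f₂) * a) - a * (a - b) / (f₁ * b + (1 - f₁) * a) =
      a * (a - b) ^ 2 * (f₂ - f₁) / ((f₁ * b + (1 - f₁) * a) * (f₂ * b + (1 - f₂) * a)) := by
  rw [div_sub_div _ _ h₂ h₁, mul_comm (f₂ * b + _)]
  ring

lemma penalty_term_monotoneOn (ha : 0 < a) (hb : 0 < b) :
    MonotoneOn (fun f ↦ a * (a - b) / (f * b + (1 - f) * a)) (Icc 0 1) := by
  intro f₁ hf₁ f₂ hf₂ h
  have hD₁ := interpolation_pos ha hb hf₁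
  have hD₂ := interpolation_pos ha hb hf₂
  refine sub_nonneg.1 ?_
  rw [penalty_term_sub hD₁.ne' hD₂.ne']
  exact div_nonneg (mul_nonneg (mul_nonneg ha.le (sq_nonneg _)) (sub_nonneg.2 h))
    (mul_pos hD₁ hD₂).le

lemma penalty_term_strictMonoOn (ha : 0 < a) (hb : 0 < b) (hab : a ≠ b) :
    StrictMonoOn (fun f ↦ a * (a - b) / (f * b + (1 - f) * a)) (Icc 0 1) := by
  intro f₁ hf₁ f₂ hf₂ h
  have hD₁ := interpolation_pos ha hb hf₁
  have hD₂ := interpolation_pos ha hb hf₂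
  refine sub_pos.1 ?_
  rw [penalty_term_sub hD₁.ne' hD₂.ne']
  have hsq : 0 < (a - b) ^ 2 := by have := sub_ne_zero.2 hab; positivity
  exact div_pos (mul_pos (mul_pos ha hsq) (sub_pos.2 h)) (mul_pos hD₁ hD₂)

end PenaltyTerm

theorem combo_penalty_strictMono_general {ι : Type*} [Fintype ι]
    (ρ d : ι → ℝ) (hρ0 : ∀ x, 0 < ρ x) (hd0 : ∀ x, 0 < d x)
    (hne : ρ ≠ d)
    (f₁ f₂ : ℝ) (hf₁0 : 0 ≤ f₁) (hf₁₂ : f₁ < f₂) (hf₂1 : f₂ ≤ 1) :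
    ∑ x, ρ x * (ρ x - d x) / (f₁ * d x + (1 - f₁) * ρ x) <
      ∑ x, ρ x * (ρ x - d x) / (f₂ * d x + (1 - f₂) * ρ x) := by
  have hf₁ : f₁ ∈ Icc (0 : ℝ) 1 := ⟨hf₁0, by linarith⟩
  have hf₂ : f₂ ∈ Icc (0 : ℝ) 1 := ⟨by linarith, hf₂1⟩
  obtain ⟨y, hy⟩ := Function.ne_iff.1 hne
  exact sum_lt_sum (fun x _ ↦ penalty_term_monotoneOn (hρ0 x) (hd0 x) hf₁ hf₂ hf₁₂.le)
    ⟨y, mem_univ y, penalty_term_strictMonoOn (hρ0 y) (hd0 y) hy hf₁ hf₂ hf₁₂⟩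

theorem combo_penalty_strictMono {ι : Type*} [Fintype ι] [Nonempty ι]
    (ρ d : ι → ℝ) (hρ0 : ∀ x, 0 < ρ x) (hd0 : ∀ x, 0 < d x)
    (hρ1 : ∑ x, ρ x = 1) (hd1 : ∑ x, d x = 1)
    (hne : ρ ≠ d)
    (f₁ f₂ : ℝ) (hf₁0 : 0 ≤ f₁) (hf₁₂ : f₁ < f₂) (hf₂1 : f₂ ≤ 1) :
    ∑ x, ρ x * (ρ x - d x) / (f₁ * d x + (1 - f₁) * ρ x) <
      ∑ x, ρ x * (ρ x - d x) / (f₂ * d x + (1 - f₂) * ρ x) :=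
  combo_penalty_strictMono_general ρ d hρ0 hd0 hne f₁ f₂ hf₁0 hf₁₂ hf₂1
end

section
/- (Interpolation Lemma, part 3: characterization of the zero penalty.) Assume ρ(x) > 0 and d(x) > 0 for every x ∈ ι, and fix f ∈ [0,1]. Then ν(ρ, f) = 0 if and only if f = 0 or ρ = d (i.e., ρ(x) = d(x) for all x). -/
/-!
Write `d_f = f d + (1 - f) ρ`, so that `ρ - d_f = f (ρ - d)`. Then each term of the penalty is
`ρ (ρ - d) / d_f = (ρ - d) + f (ρ - d)² / d_f`, and since `∑ (ρ - d) = 0` the penalty equals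
`f · ∑ (ρ - d)² / d_f`, a product of `f` with a χ²-type divergence that vanishes exactly when
`ρ = d`.
-/

open Finset

lemma interp_pos {f a b : ℝ} (hf0 : 0 ≤ f) (hf1 : f ≤ 1) (ha : 0 < a) (hb : 0 < b) :
    0 < f * a + (1 - f) * b :=
  by simpa using convex_Ioi (0 : ℝ) ha hb hf0 (sub_nonneg.2 hf1) (add_sub_cancel f 1)

lemma mul_sub_div_interp_eq {K : Type*} [Field K] {f a b : K} (h : f * a + (1 - f) * b ≠ 0) :
    b * (b - a) / (f * a + (1 - f) * b) = (b - a) + f * (b - a) ^ 2 / (f * a + (1 - f) * b) := by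
  rw [add_div' _ _ _ h, div_left_inj' h]
  ring

lemma sum_mul_sub_div_interp_eq {ι K : Type*} [Fintype ι] [Field K] (ρ d : ι → K) (f : K)
    (hsum : ∑ x, ρ x = ∑ x, d x) (hD : ∀ x, f * d x + (1 - f) * ρ x ≠ 0) :
    ∑ x, ρ x * (ρ x - d x) / (f * d x + (1 - f) * ρ x)
      = f * ∑ x, (ρ x - d x) ^ 2 / (f * d x + (1 - f) * ρ x) := by
  simp_rw [mul_sub_div_interp_eq (hD _), sum_add_distrib, sum_sub_distrib, hsum, sub_self,
    zero_add, mul_sum, mul_div_assoc]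

lemma sum_sq_sub_div_eq_zero_iff {ι : Type*} [Fintype ι] {ρ d w : ι → ℝ} (hw : ∀ x, 0 < w x) :
    ∑ x, (ρ x - d x) ^ 2 / w x = 0 ↔ ρ = d := by
  rw [sum_eq_zero_iff_of_nonneg fun x _ => div_nonneg (sq_nonneg _) (hw x).le, funext_iff]
  simp [(hw _).ne', sub_eq_zero]

theorem combo_penalty_eq_zero_iff_general {ι : Type*} [Fintype ι]
    (ρ d : ι → ℝ) (hρ0 : ∀ x, 0 < ρ x) (hd0 : ∀ x, 0 < d x)
    (hρ1 : ∑ x, ρ x = 1) (hd1 : ∑ x, d x = 1)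
    (f : ℝ) (hf0 : 0 ≤ f) (hf1 : f ≤ 1) :
    (∑ x, ρ x * (ρ x - d x) / (f * d x + (1 - f) * ρ x)) = 0 ↔ (f = 0 ∨ ρ = d) := by
  have hD : ∀ x, 0 < f * d x + (1 - f) * ρ x := fun x => interp_pos hf0 hf1 (hd0 x) (hρ0 x)
  rw [sum_mul_sub_div_interp_eq ρ d f (hρ1.trans hd1.symm) fun x => (hD x).ne', mul_eq_zero,
    sum_sq_sub_div_eq_zero_iff hD]

theorem combo_penalty_eq_zero_iff {ι : Type*} [Fintype ι] [Nonempty ι]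
    (ρ d : ι → ℝ) (hρ0 : ∀ x, 0 < ρ x) (hd0 : ∀ x, 0 < d x)
    (hρ1 : ∑ x, ρ x = 1) (hd1 : ∑ x, d x = 1)
    (f : ℝ) (hf0 : 0 ≤ f) (hf1 : f ≤ 1) :
    (∑ x, ρ x * (ρ x - d x) / (f * d x + (1 - f) * ρ x)) = 0 ↔ (f = 0 ∨ ρ = d) :=
  combo_penalty_eq_zero_iff_general ρ d hρ0 hd0 hρ1 hd1 f hf0 hf1
end

section
/- (Remark A.1: the expected COMBO penalty under the dataset distribution is nonpositive.) Fix f ∈ [0,1] and assume d_f(x) > 0 for every x ∈ ι. Then ν̃ := Σ_x d(x)·(ρ(x) − d(x))/d_f(x) ≤ 0; moreover, if ρ ≠ d and f < 1, then ν̃ < 0. (Hence, unlike CQL, COMBO in expectation pushes Q-values up rather than down on dataset state-action tuples.) -/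
/-! Since `d_f - d = (1 - f) (ρ - d)`, each summand splits as
`d (ρ - d) / d_f = (ρ - d) - (1 - f) (ρ - d)² / d_f`. The first parts sum to `1 - 1 = 0`, so
`ν̃ = -(1 - f) Σ (ρ - d)² / d_f`, a nonpositive multiple of a chi-square-type sum that is
positive as soon as `ρ ≠ d`. -/

open Finset

lemma mul_sub_div_mix_eq {a b f : ℝ} (h : f * b + (1 - f) * a ≠ 0) :
    b * (a - b) / (f * b + (1 - f) * a) =
      (a - b) - (1 - f) * ((a - b) ^ 2 / (f * b + (1 - f) * a)) := by
  rw [eq_comm, sub_eq_iff_eq_add, ← mul_div_assoc, ← add_div, eq_div_iff h]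
  ring

lemma sum_mul_sub_div_mix_eq {ι : Type*} (s : Finset ι) (ρ d : ι → ℝ) (f : ℝ)
    (hsum : ∑ x ∈ s, ρ x = ∑ x ∈ s, d x) (h : ∀ x ∈ s, f * d x + (1 - f) * ρ x ≠ 0) :
    ∑ x ∈ s, d x * (ρ x - d x) / (f * d x + (1 - f) * ρ x) =
      -((1 - f) * ∑ x ∈ s, (ρ x - d x) ^ 2 / (f * d x + (1 - f) * ρ x)) := by
  rw [sum_congr rfl fun x hx => mul_sub_div_mix_eq (h x hx), sum_sub_distrib, sum_sub_distrib,
    hsum, ← mul_sum]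
  ring

lemma sum_sq_sub_div_pos {ι : Type*} {s : Finset ι} {a b w : ι → ℝ} (hw : ∀ x ∈ s, 0 < w x)
    {y : ι} (hy : y ∈ s) (hab : a y ≠ b y) :
    0 < ∑ x ∈ s, (a x - b x) ^ 2 / w x :=
  sum_pos' (fun x hx => div_nonneg (sq_nonneg _) (hw x hx).le)
    ⟨y, hy, div_pos (sq_pos_of_ne_zero (sub_ne_zero.2 hab)) (hw y hy)⟩

theorem combo_dataset_penalty_nonpos_general {ι : Type*} [Fintype ι]
    (ρ d : ι → ℝ)
    (hρ1 : ∑ x, ρ x = 1) (hd1 : ∑ x, d x = 1)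
    (f : ℝ) (hf1 : f ≤ 1)
    (hdf : ∀ x, 0 < f * d x + (1 - f) * ρ x) :
    (∑ x, d x * (ρ x - d x) / (f * d x + (1 - f) * ρ x)) ≤ 0 ∧
    (ρ ≠ d → f < 1 → (∑ x, d x * (ρ x - d x) / (f * d x + (1 - f) * ρ x)) < 0) := by
  have hν := sum_mul_sub_div_mix_eq univ ρ d f (by rw [hρ1, hd1]) fun x _ => (hdf x).ne'
  refine ⟨?_, fun hne hf => ?_⟩
  · have hχ : 0 ≤ ∑ x, (ρ x - d x) ^ 2 / (f * d x + (1 - f) * ρ x) :=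
      sum_nonneg fun x _ => div_nonneg (sq_nonneg _) (hdf x).le
    rw [hν]
    exact neg_nonpos.2 (mul_nonneg (sub_nonneg.2 hf1) hχ)
  · obtain ⟨y, hy⟩ := Function.ne_iff.1 hne
    rw [hν]
    exact neg_neg_of_pos (mul_pos (sub_pos.2 hf)
      (sum_sq_sub_div_pos (fun x _ => hdf x) (mem_univ y) hy))

theorem combo_dataset_penalty_nonpos {ι : Type*} [Fintype ι] [Nonempty ι]
    (ρ d : ι → ℝ) (hρ0 : ∀ x, 0 ≤ ρ x) (hd0 : ∀ x, 0 ≤ d x)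
    (hρ1 : ∑ x, ρ x = 1) (hd1 : ∑ x, d x = 1)
    (f : ℝ) (hf0 : 0 ≤ f) (hf1 : f ≤ 1)
    (hdf : ∀ x, 0 < f * d x + (1 - f) * ρ x) :
    (∑ x, d x * (ρ x - d x) / (f * d x + (1 - f) * ρ x)) ≤ 0 ∧
    (ρ ≠ d → f < 1 → (∑ x, d x * (ρ x - d x) / (f * d x + (1 - f) * ρ x)) < 0) :=
  combo_dataset_penalty_nonpos_general ρ d hρ1 hd1 f hf1 hdf
end

section
/- (Total-variation bound on return differences between two dynamics.) Let X be a finite nonempty type, γ ∈ [0,1), P₁, P₂ : X → X → ℝ row-stochastic matrices, R_max ≥ 0, r : X → ℝ with |r(x)| ≤ R_max for all x, and μ : X → ℝ a probability mass function. Let D := (1/2)·max_x Σ_y |P₁(x,y) − P₂(x,y)|. Then |Σ_x μ(x)·(S_{P₁}·r)(x) − Σ_x μ(x)·(S_{P₂}·r)(x)| ≤ 2·γ·R_max·D/(1−γ)². -/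
/-! In the `L∞` operator norm (maximal absolute row sum) a row-stochastic `P` has `‖P‖ ≤ 1`, so
`S_P = (1 - γ • P)⁻¹ = 1 + γ • P * S_P` has `‖S_P‖ ≤ 1 / (1 - γ)`, while `‖P₁ - P₂‖ = 2 D`.
The resolvent identity `S₁ - S₂ = γ • S₁ * (P₁ - P₂) * S₂` then bounds `‖S₁ - S₂‖` by
`2 γ D / (1 - γ)²`, and averaging against `μ` loses nothing in the sup norm. -/

open Matrix
open scoped Matrix.Norms.Operator

theorem norm_ringInverse_one_sub_le {R : Type*} [NormedRing R] [NormOneClass R]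
    [HasSummableGeomSeries R] {t : R} (ht : ‖t‖ < 1) :
    ‖Ring.inverse (1 - t)‖ ≤ (1 - ‖t‖)⁻¹ := by
  set s := Ring.inverse (1 - t)
  have hs : s = 1 + t * s := by
    have := Ring.mul_inverse_cancel _ (isUnit_one_sub_of_norm_lt_one ht)
    rw [sub_mul, one_mul] at this
    rw [← this, sub_add_cancel]
  have hs_norm : ‖s‖ ≤ 1 + ‖t‖ * ‖s‖ :=
    calc ‖s‖ = ‖1 + t * s‖ := congrArg _ hs
      _ ≤ ‖(1 : R)‖ + ‖t * s‖ := norm_add_le _ _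
      _ ≤ 1 + ‖t‖ * ‖s‖ := by rw [norm_one]; gcongr; exact norm_mul_le _ _
  rw [← one_div, le_div_iff₀ (by linarith)]
  linarith

theorem norm_smul_le_of_norm_le_one {E : Type*} [SeminormedAddCommGroup E] [NormedSpace ℝ E]
    {x : E} (hx : ‖x‖ ≤ 1) {γ : ℝ} (hγ : 0 ≤ γ) : ‖γ • x‖ ≤ γ := by
  rw [norm_smul, Real.norm_of_nonneg hγ]
  exact mul_le_of_le_one_right hγ hx

namespace Matrix
variable {m n : Type*} [Fintype m] [Fintype n]

theorem linfty_opNorm_eq_sup' {α : Type*} [SeminormedAddCommGroup α] [Nonempty m]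
    (A : Matrix m n α) : ‖A‖ = Finset.univ.sup' Finset.univ_nonempty fun i => ∑ j, ‖A i j‖ := by
  rw [linfty_opNorm_def, ← Finset.sup'_eq_sup Finset.univ_nonempty,
    Finset.apply_sup'_eq_sup'_comp _ _ fun _ _ => NNReal.coe_mono.map_max]
  simp [Function.comp_def]

theorem linfty_opNorm_le_one_of_mem_rowStochastic [DecidableEq n] {P : Matrix n n ℝ}
    (hP : P ∈ rowStochastic ℝ n) : ‖P‖ ≤ 1 := by
  rw [linfty_opNorm_def, NNReal.coe_le_one, Finset.sup_le_iff]
  intro i _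
  rw [← NNReal.coe_le_one, NNReal.coe_sum]
  simp_rw [coe_nnnorm, Real.norm_of_nonneg (nonneg_of_mem_rowStochastic hP),
    sum_row_of_mem_rowStochastic hP i, le_refl]

variable [DecidableEq n]

theorem isUnit_one_sub_smul {P : Matrix n n ℝ} (hP : ‖P‖ ≤ 1) {γ : ℝ} (hγ0 : 0 ≤ γ)
    (hγ1 : γ < 1) :
    IsUnit (1 - γ • P) :=
  isUnit_one_sub_of_norm_lt_one ((norm_smul_le_of_norm_le_one hP hγ0).trans_lt hγ1)

theorem norm_inv_one_sub_smul_le [Nonempty n] {P : Matrix n n ℝ} (hP : ‖P‖ ≤ 1) {γ : ℝ}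
    (hγ0 : 0 ≤ γ) (hγ1 : γ < 1) :
    ‖(1 - γ • P)⁻¹‖ ≤ (1 - γ)⁻¹ := by
  have hγP : ‖γ • P‖ ≤ γ := norm_smul_le_of_norm_le_one hP hγ0
  rw [nonsing_inv_eq_ringInverse]
  exact (norm_ringInverse_one_sub_le (hγP.trans_lt hγ1)).trans (by gcongr)

theorem inv_one_sub_smul_sub_inv_one_sub_smul {P₁ P₂ : Matrix n n ℝ} {γ : ℝ}
    (h₁ : IsUnit (1 - γ • P₁)) (h₂ : IsUnit (1 - γ • P₂)) :
    (1 - γ • P₁)⁻¹ - (1 - γ • P₂)⁻¹ = γ • ((1 - γ • P₁)⁻¹ * (P₁ - P₂) * (1 - γ • P₂)⁻¹) := by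
  rw [inv_sub_inv (iff_of_true h₁ h₂), sub_sub_sub_cancel_left, ← smul_sub, mul_smul_comm,
    smul_mul_assoc]

theorem norm_inv_one_sub_smul_sub_le [Nonempty n] {P₁ P₂ : Matrix n n ℝ} (hP₁ : ‖P₁‖ ≤ 1)
    (hP₂ : ‖P₂‖ ≤ 1) {γ : ℝ} (hγ0 : 0 ≤ γ) (hγ1 : γ < 1) :
    ‖(1 - γ • P₁)⁻¹ - (1 - γ • P₂)⁻¹‖ ≤ γ * ‖P₁ - P₂‖ / (1 - γ) ^ 2 := by
  rw [inv_one_sub_smul_sub_inv_one_sub_smul (isUnit_one_sub_smul hP₁ hγ0 hγ1)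
    (isUnit_one_sub_smul hP₂ hγ0 hγ1)]
  calc _ = γ * ‖(1 - γ • P₁)⁻¹ * (P₁ - P₂) * (1 - γ • P₂)⁻¹‖ := by
        rw [norm_smul, Real.norm_of_nonneg hγ0]
    _ ≤ γ * (‖(1 - γ • P₁)⁻¹‖ * ‖P₁ - P₂‖ * ‖(1 - γ • P₂)⁻¹‖) := by
        gcongr; exact norm_mul₃_le
    _ ≤ γ * ((1 - γ)⁻¹ * ‖P₁ - P₂‖ * (1 - γ)⁻¹) := by
        gcongr
        exacts [norm_inv_one_sub_smul_le hP₁ hγ0 hγ1, norm_inv_one_sub_smul_le hP₂ hγ0 hγ1]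
    _ = γ * ‖P₁ - P₂‖ / (1 - γ) ^ 2 := by rw [div_eq_mul_inv, ← inv_pow]; ring

end Matrix

theorem abs_sum_mul_le_norm {ι : Type*} [Fintype ι] {μ : ι → ℝ} (hμ0 : ∀ i, 0 ≤ μ i)
    (hμ1 : ∑ i, μ i = 1) (v : ι → ℝ) :
    |∑ i, μ i * v i| ≤ ‖v‖ :=
  calc |∑ i, μ i * v i| ≤ ∑ i, μ i * ‖v‖ := by
        refine (Finset.abs_sum_le_sum_abs _ _).trans (Finset.sum_le_sum fun i _ => ?_)
        rw [abs_mul, abs_of_nonneg (hμ0 i)]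
        exact mul_le_mul_of_nonneg_left (norm_le_pi_norm v i) (hμ0 i)
    _ = ‖v‖ := by rw [← Finset.sum_mul, hμ1, one_mul]

theorem return_difference_tv_bound_general {X : Type*} [Fintype X] [Nonempty X] [DecidableEq X]
    (γ : ℝ) (hγ0 : 0 ≤ γ) (hγ1 : γ < 1)
    (P₁ P₂ : Matrix X X ℝ)
    (hP₁0 : ∀ x y, 0 ≤ P₁ x y) (hP₁1 : ∀ x, ∑ y, P₁ x y = 1)
    (hP₂0 : ∀ x y, 0 ≤ P₂ x y) (hP₂1 : ∀ x, ∑ y, P₂ x y = 1)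
    (Rmax : ℝ) (r : X → ℝ) (hr : ∀ x, |r x| ≤ Rmax)
    (μ : X → ℝ) (hμ0 : ∀ x, 0 ≤ μ x) (hμ1 : ∑ x, μ x = 1)
    (D : ℝ)
    (hD : D = (1 / 2) * Finset.univ.sup' Finset.univ_nonempty
      (fun x => ∑ y, |P₁ x y - P₂ x y|)) :
    |(∑ x, μ x * ((1 - γ • P₁)⁻¹ *ᵥ r) x) - ∑ x, μ x * ((1 - γ • P₂)⁻¹ *ᵥ r) x| ≤
      2 * γ * Rmax * D / (1 - γ) ^ 2 := by
  have hP₁ := linfty_opNorm_le_one_of_mem_rowStochastic (mem_rowStochastic_iff_sum.2 ⟨hP₁0, hP₁1⟩)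
  have hP₂ := linfty_opNorm_le_one_of_mem_rowStochastic (mem_rowStochastic_iff_sum.2 ⟨hP₂0, hP₂1⟩)
  have hPD : ‖P₁ - P₂‖ = 2 * D := by
    simp only [hD, linfty_opNorm_eq_sup', Matrix.sub_apply, Real.norm_eq_abs]
    ring
  have hr_norm : ‖r‖ ≤ Rmax := (pi_norm_le_iff_of_nonempty r).2 hr
  calc _ = |∑ x, μ x * (((1 - γ • P₁)⁻¹ - (1 - γ • P₂)⁻¹) *ᵥ r) x| := by
        rw [← Finset.sum_sub_distrib]
        simp only [sub_mulVec, Pi.sub_apply, mul_sub]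
    _ ≤ ‖((1 - γ • P₁)⁻¹ - (1 - γ • P₂)⁻¹) *ᵥ r‖ := abs_sum_mul_le_norm hμ0 hμ1 _
    _ ≤ ‖(1 - γ • P₁)⁻¹ - (1 - γ • P₂)⁻¹‖ * ‖r‖ := linfty_opNorm_mulVec _ _
    _ ≤ γ * ‖P₁ - P₂‖ / (1 - γ) ^ 2 * Rmax := by
        gcongr
        exact norm_inv_one_sub_smul_sub_le hP₁ hP₂ hγ0 hγ1
    _ = 2 * γ * Rmax * D / (1 - γ) ^ 2 := by rw [hPD]; ring

theorem return_difference_tv_bound {X : Type*} [Fintype X] [Nonempty X] [DecidableEq X]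
    (γ : ℝ) (hγ0 : 0 ≤ γ) (hγ1 : γ < 1)
    (P₁ P₂ : Matrix X X ℝ)
    (hP₁0 : ∀ x y, 0 ≤ P₁ x y) (hP₁1 : ∀ x, ∑ y, P₁ x y = 1)
    (hP₂0 : ∀ x y, 0 ≤ P₂ x y) (hP₂1 : ∀ x, ∑ y, P₂ x y = 1)
    (Rmax : ℝ) (hR : 0 ≤ Rmax) (r : X → ℝ) (hr : ∀ x, |r x| ≤ Rmax)
    (μ : X → ℝ) (hμ0 : ∀ x, 0 ≤ μ x) (hμ1 : ∑ x, μ x = 1)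
    (D : ℝ)
    (hD : D = (1 / 2) * Finset.univ.sup' Finset.univ_nonempty
      (fun x => ∑ y, |P₁ x y - P₂ x y|)) :
    |(∑ x, μ x * ((1 - γ • P₁)⁻¹ *ᵥ r) x) - ∑ x, μ x * ((1 - γ • P₂)⁻¹ *ᵥ r) x| ≤
      2 * γ * Rmax * D / (1 - γ) ^ 2 :=
  return_difference_tv_bound_general γ hγ0 hγ1 P₁ P₂ hP₁0 hP₁1 hP₂0 hP₂1 Rmax r hr μ hμ0 hμ1 D hD
end

section
/- (Proposition A.2: asymptotic pointwise lower bound of the COMBO fixed point, matrix form.) Let X be a finite nonempty type, γ ∈ [0,1), and let P, P̄, P̂ : X → X → ℝ be row-stochastic matrices (true, empirical, and model dynamics composed with the policy), r, r̄, r̂ : X → ℝ rewards, f ∈ [0,1], and β ≥ 0. Let ρ, d, d_f : X → ℝ with d_f(x) > 0 for all x, and set c(x) = (ρ(x) − d(x))/d_f(x). Suppose Q̂ : X → ℝ satisfies the COMBO fixed-point equation Q̂(x) = f·(r̄(x) + γ·Σ_y P̄(x,y)·Q̂(y)) + (1−f)·(r̂(x) + γ·Σ_y P̂(x,y)·Q̂(y))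 − β·c(x) for all x. Let M := max_x |Q̂(x)|, and define ε̄(x) := |r̄(x) − r(x)| + γ·M·Σ_y |P̄(x,y) − P(x,y)| and ε̂(x) := |r̂(x) − r(x)| + γ·M·Σ_y |P̂(x,y) − P(x,y)|. Then with Q^π := S_P·r, for all x ∈ X: Q̂(x) ≤ Q^π(x) − β·(S_P·c)(x) + f·(S_P·ε̄)(x) + (1−f)·(S_P·ε̂)(x). -/
/-!
For a row-stochastic `P` and `0 ≤ γ < 1`, the operator `1 - γ • P` satisfies a discrete minimum
principle, so `(1 - γ • P) *ᵥ u ≤ (1 - γ • P) *ᵥ v` implies `u ≤ v`; in particular it is invertible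
and its inverse is monotone. Replacing each model backup `r' + γ P' Q̂` in the fixed-point equation
by the true backup `r + γ P Q̂` costs at most the model error (with `|Q̂| ≤ M`), so
`(1 - γ • P) *ᵥ Q̂ ≤ r - β c + f ε̄ + (1 - f) ε̂`, and applying the monotone inverse gives the bound.
-/

open Matrix Finset

section RowStochastic

variable {X : Type*} [Fintype X] [DecidableEq X] {γ : ℝ} {P : Matrix X X ℝ}

lemma one_sub_smul_mulVec_apply (u : X → ℝ) (x : X) :
    ((1 - γ • P) *ᵥ u) x = u x - γ * ∑ y, P x y * u y := by
  rw [sub_mulVec, one_mulVec, smul_mulVec]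
  rfl

/-- Discrete minimum principle: at a minimiser `x₀` of `u`, the average `(P *ᵥ u) x₀` is at least
`u x₀`, so `(1 - γ) * u x₀ ≥ ((1 - γ • P) *ᵥ u) x₀ ≥ 0`. -/
lemma nonneg_of_one_sub_smul_mulVec_nonneg (hP : P ∈ rowStochastic ℝ X) (hγ0 : 0 ≤ γ)
    (hγ1 : γ < 1) {u : X → ℝ} (h : 0 ≤ (1 - γ • P) *ᵥ u) : 0 ≤ u := by
  intro x
  obtain ⟨x₀, -, hmin⟩ := exists_min_image univ u ⟨x, mem_univ x⟩
  have hmean : u x₀ ≤ ∑ y, P x₀ y * u y :=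
    calc u x₀ = ∑ y, P x₀ y * u x₀ := by rw [← sum_mul, sum_row_of_mem_rowStochastic hP, one_mul]
      _ ≤ ∑ y, P x₀ y * u y := sum_le_sum fun y hy =>
          mul_le_mul_of_nonneg_left (hmin y hy) (nonneg_of_mem_rowStochastic hP)
  have hx₀ : 0 ≤ u x₀ - γ * ∑ y, P x₀ y * u y := one_sub_smul_mulVec_apply (P := P) u x₀ ▸ h x₀
  have : 0 ≤ (1 - γ) * u x₀ := by linarith [mul_le_mul_of_nonneg_left hmean hγ0]
  exact (nonneg_of_mul_nonneg_right this (by linarith)).trans (hmin x (mem_univ x))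

lemma le_of_one_sub_smul_mulVec_le (hP : P ∈ rowStochastic ℝ X) (hγ0 : 0 ≤ γ) (hγ1 : γ < 1)
    {u v : X → ℝ} (h : (1 - γ • P) *ᵥ u ≤ (1 - γ • P) *ᵥ v) : u ≤ v :=
  sub_nonneg.1 <| nonneg_of_one_sub_smul_mulVec_nonneg hP hγ0 hγ1 <| by
    rwa [mulVec_sub, sub_nonneg]

lemma isUnit_one_sub_smul (hP : P ∈ rowStochastic ℝ X) (hγ0 : 0 ≤ γ) (hγ1 : γ < 1) :
    IsUnit (1 - γ • P) :=
  mulVec_injective_iff_isUnit.1 fun _ _ h =>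
    le_antisymm (le_of_one_sub_smul_mulVec_le hP hγ0 hγ1 h.le)
      (le_of_one_sub_smul_mulVec_le hP hγ0 hγ1 h.ge)

lemma le_inv_mulVec_of_one_sub_smul_mulVec_le (hP : P ∈ rowStochastic ℝ X) (hγ0 : 0 ≤ γ)
    (hγ1 : γ < 1) {q v : X → ℝ} (h : (1 - γ • P) *ᵥ q ≤ v) : q ≤ (1 - γ • P)⁻¹ *ᵥ v := by
  refine le_of_one_sub_smul_mulVec_le hP hγ0 hγ1 ?_
  rwa [mulVec_mulVec, mul_nonsing_inv _ ((isUnit_one_sub_smul hP hγ0 hγ1).map detMonoidHom),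
    one_mulVec]

end RowStochastic

lemma sum_mul_le_mul_sum_abs {X : Type*} [Fintype X] {a q : X → ℝ} {M : ℝ}
    (hq : ∀ y, |q y| ≤ M) : ∑ y, a y * q y ≤ M * ∑ y, |a y| := by
  rw [mul_sum]
  refine sum_le_sum fun y _ => ?_
  calc a y * q y ≤ |a y| * |q y| := by rw [← abs_mul]; exact le_abs_self _
    _ ≤ M * |a y| := by rw [mul_comm M]; exact mul_le_mul_of_nonneg_left (hq y) (abs_nonneg _)

lemma bellman_backup_le_add_model_error {X : Type*} [Fintype X] {γ M : ℝ} (hγ0 : 0 ≤ γ)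
    {q : X → ℝ} (hq : ∀ y, |q y| ≤ M) (r r' : X → ℝ) (P P' : Matrix X X ℝ) (x : X) :
    r' x + γ * ∑ y, P' x y * q y ≤
      r x + γ * ∑ y, P x y * q y + (|r' x - r x| + γ * M * ∑ y, |P' x y - P x y|) := by
  have hdiff : ∑ y, P' x y * q y - ∑ y, P x y * q y ≤ M * ∑ y, |P' x y - P x y| := by
    rw [← sum_sub_distrib]
    simpa only [sub_mul] using sum_mul_le_mul_sum_abs (a := fun y => P' x y - P x y) hq
  linarith [le_abs_self (r' x - r x), mul_le_mul_of_nonneg_left hdiff hγ0]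

theorem combo_fixed_point_pointwise_lower_bound_general {X : Type*}
    [Fintype X] [Nonempty X] [DecidableEq X]
    (γ : ℝ) (hγ0 : 0 ≤ γ) (hγ1 : γ < 1)
    (P Pbar Phat : Matrix X X ℝ)
    (hP0 : ∀ x y, 0 ≤ P x y) (hP1 : ∀ x, ∑ y, P x y = 1)
    (r rbar rhat : X → ℝ)
    (f β : ℝ) (hf0 : 0 ≤ f) (hf1 : f ≤ 1)
    (c : X → ℝ)
    (Qhat : X → ℝ)
    (hfix : ∀ x, Qhat x =
      f * (rbar x + γ * ∑ y, Pbar x y * Qhat y) +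
        (1 - f) * (rhat x + γ * ∑ y, Phat x y * Qhat y) - β * c x)
    (M : ℝ) (hM : M = Finset.univ.sup' Finset.univ_nonempty fun x => |Qhat x|)
    (εbar εhat : X → ℝ)
    (hεbar : ∀ x, εbar x = |rbar x - r x| + γ * M * ∑ y, |Pbar x y - P x y|)
    (hεhat : ∀ x, εhat x = |rhat x - r x| + γ * M * ∑ y, |Phat x y - P x y|) :
    ∀ x, Qhat x ≤ ((1 - γ • P)⁻¹ *ᵥ r) x - β * ((1 - γ • P)⁻¹ *ᵥ c) x +
      f * ((1 - γ • P)⁻¹ *ᵥ εbar) x + (1 - f) * ((1 - γ • P)⁻¹ *ᵥ εhat) x := by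
  have hP : P ∈ rowStochastic ℝ X := mem_rowStochastic_iff_sum.2 ⟨hP0, hP1⟩
  have hQM : ∀ y, |Qhat y| ≤ M := fun y => hM ▸ le_sup' (fun x => |Qhat x|) (mem_univ y)
  have hbellman : (1 - γ • P) *ᵥ Qhat ≤ r - β • c + f • εbar + (1 - f) • εhat := by
    intro x
    have hbar := bellman_backup_le_add_model_error hγ0 hQM r rbar P Pbar x
    have hhat := bellman_backup_le_add_model_error hγ0 hQM r rhat P Phat x
    rw [one_sub_smul_mulVec_apply]
    simp only [Pi.add_apply, Pi.sub_apply, Pi.smul_apply, smul_eq_mul, hεbar, hεhat]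
    linarith [hfix x, mul_le_mul_of_nonneg_left hbar hf0,
      mul_le_mul_of_nonneg_left hhat (sub_nonneg.2 hf1)]
  intro x
  simpa [mulVec_add, mulVec_sub, mulVec_smul] using
    le_inv_mulVec_of_one_sub_smul_mulVec_le hP hγ0 hγ1 hbellman x

theorem combo_fixed_point_pointwise_lower_bound {X : Type*}
    [Fintype X] [Nonempty X] [DecidableEq X]
    (γ : ℝ) (hγ0 : 0 ≤ γ) (hγ1 : γ < 1)
    (P Pbar Phat : Matrix X X ℝ)
    (hP0 : ∀ x y, 0 ≤ P x y) (hP1 : ∀ x, ∑ y, P x y = 1)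
    (hPbar0 : ∀ x y, 0 ≤ Pbar x y) (hPbar1 : ∀ x, ∑ y, Pbar x y = 1)
    (hPhat0 : ∀ x y, 0 ≤ Phat x y) (hPhat1 : ∀ x, ∑ y, Phat x y = 1)
    (r rbar rhat : X → ℝ)
    (f β : ℝ) (hf0 : 0 ≤ f) (hf1 : f ≤ 1) (hβ : 0 ≤ β)
    (ρ d df : X → ℝ) (hdf : ∀ x, 0 < df x)
    (c : X → ℝ) (hc : ∀ x, c x = (ρ x - d x) / df x)
    (Qhat : X → ℝ)
    (hfix : ∀ x, Qhat x =
      f * (rbar x + γ * ∑ y, Pbar x y * Qhat y) +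
        (1 - f) * (rhat x + γ * ∑ y, Phat x y * Qhat y) - β * c x)
    (M : ℝ) (hM : M = Finset.univ.sup' Finset.univ_nonempty fun x => |Qhat x|)
    (εbar εhat : X → ℝ)
    (hεbar : ∀ x, εbar x = |rbar x - r x| + γ * M * ∑ y, |Pbar x y - P x y|)
    (hεhat : ∀ x, εhat x = |rhat x - r x| + γ * M * ∑ y, |Phat x y - P x y|) :
    ∀ x, Qhat x ≤ ((1 - γ • P)⁻¹ *ᵥ r) x - β * ((1 - γ • P)⁻¹ *ᵥ c) x +
      f * ((1 - γ • P)⁻¹ *ᵥ εbar) x + (1 - f) * ((1 - γ • P)⁻¹ *ᵥ εhat) x :=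
  combo_fixed_point_pointwise_lower_bound_general γ hγ0 hγ1 P Pbar Phat hP0 hP1 r rbar rhat f β hf0
    hf1 c Qhat hfix M hM εbar εhat hεbar hεhat
end

section
/- (Proposition 1: COMBO lower-bounds the expected value under the initial distribution for sufficiently large β.) Let X be a finite nonempty type and γ ∈ (0,1). Let P, P̄, P̂ : X → X → ℝ be row-stochastic matrices (true, empirical, and model dynamics composed with the policy), and r, r̄, r̂ : X → ℝ rewards. Fix f ∈ (0,1], a probability mass function μ : X → ℝ with μ(x) > 0 for all x, and a probability mass function d : X → ℝ with d(x) > 0 for all x. Set P_f := f·P̄ + (1−f)·P̂ and r_f := f·r̄ + (1−f)·r̂, define the occupancy ρ(x) := (1−γ)·Σ_y μ(y)·S_{P_f}(y,x), set d_f(x) := f·d(x) + (1−f)·ρ(x) and c(x) := (ρ(x) − d(x))/d_f(x). Assume ρ ≠ d. For each β ≥ 0, let Q̂_β := S_{P_f}·(r_f − β·c) (the unique fixed point of the β-penalized interpolated Bellman backup), and let Q^π := S_P·r. Then there exists β₀ ≥ 0 such that for all β ≥ β₀: Σ_x μ(x)·Q̂_β(x) ≤ Σ_x μ(x)·Q^π(x).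 -/
/-!
The penalized value is affine in β with slope `-(μ ⬝ᵥ S c) = -(1 - γ)⁻¹ (ρ ⬝ᵥ c)`, where
`S = (1 - γ P_f)⁻¹` and ρ is the discounted occupancy of μ under `P_f`. Because ρ and d are
probability vectors, the linear parts of `ρ (ρ - d) / d_f = (ρ - d) + f (ρ - d)² / d_f` cancel,
so `ρ ⬝ᵥ c = f Σ (ρ - d)² / d_f > 0` when ρ ≠ d. Hence the penalized value drops below the fixed
number `μ ⬝ᵥ Q^π` once β is large.
-/

open Matrix Finset

namespace Matrix

variable {X : Type*} [Fintype X] [DecidableEq X] {γ : ℝ} {M : Matrix X X ℝ}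

theorem nonneg_of_one_sub_smul_mulVec_nonneg (hM : M ∈ rowStochastic ℝ X) (hγ0 : 0 ≤ γ)
    (hγ1 : γ < 1) {w : X → ℝ} (hw : 0 ≤ (1 - γ • M) *ᵥ w) : 0 ≤ w := by
  intro x
  obtain ⟨x₀, -, hmin⟩ := exists_min_image univ w ⟨x, mem_univ x⟩
  -- discrete maximum principle: at a minimum of `w`, averaging under `M` can only increase it
  have hmean : w x₀ ≤ (M *ᵥ w) x₀ := calc
    w x₀ = ∑ z, M x₀ z * w x₀ := by rw [← sum_mul, sum_row_of_mem_rowStochastic hM, one_mul]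
    _ ≤ ∑ z, M x₀ z * w z :=
      sum_le_sum fun z _ => mul_le_mul_of_nonneg_left (hmin z (mem_univ z)) (hM.1 x₀ z)
  have hw₀ : 0 ≤ w x₀ - γ * (M *ᵥ w) x₀ := by
    simpa [sub_mulVec, smul_mulVec] using hw x₀
  have : 0 ≤ (1 - γ) * w x₀ := by nlinarith
  exact (nonneg_of_mul_nonneg_right this (by linarith)).trans (hmin x (mem_univ x))

theorem isUnit_det_one_sub_smul (hM : M ∈ rowStochastic ℝ X) (hγ0 : 0 ≤ γ) (hγ1 : γ < 1) :
    IsUnit (1 - γ • M).det := by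
  rw [isUnit_iff_ne_zero, Ne, ← exists_mulVec_eq_zero_iff]
  rintro ⟨v, hv, hv0⟩
  have hpos := nonneg_of_one_sub_smul_mulVec_nonneg hM hγ0 hγ1 hv0.ge
  have hneg := nonneg_of_one_sub_smul_mulVec_nonneg hM hγ0 hγ1 (w := -v)
    (by rw [mulVec_neg, hv0, neg_zero])
  exact hv (le_antisymm (by simpa using hneg) hpos)

theorem inv_one_sub_smul_nonneg (hM : M ∈ rowStochastic ℝ X) (hγ0 : 0 ≤ γ) (hγ1 : γ < 1)
    (x y : X) : 0 ≤ (1 - γ • M)⁻¹ x y := by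
  have hcol : 0 ≤ (1 - γ • M)⁻¹ *ᵥ Pi.single y 1 := by
    refine nonneg_of_one_sub_smul_mulVec_nonneg hM hγ0 hγ1 ?_
    rw [mulVec_mulVec, mul_nonsing_inv _ (isUnit_det_one_sub_smul hM hγ0 hγ1), one_mulVec]
    exact Pi.single_nonneg.2 zero_le_one
  simpa using hcol x

theorem inv_one_sub_smul_mulVec_one (hM : M ∈ rowStochastic ℝ X) (hγ0 : 0 ≤ γ)
    (hγ1 : γ < 1) : (1 - γ • M)⁻¹ *ᵥ 1 = (1 - γ)⁻¹ • 1 := by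
  have hγ : 1 - γ ≠ 0 := by linarith
  have h : (1 - γ • M) *ᵥ 1 = (1 - γ) • 1 := by
    rw [sub_mulVec, smul_mulVec, one_mulVec, hM.2, sub_smul, one_smul]
  calc (1 - γ • M)⁻¹ *ᵥ 1 = (1 - γ)⁻¹ • (1 - γ • M)⁻¹ *ᵥ ((1 - γ) • 1) := by
        rw [mulVec_smul, smul_smul, inv_mul_cancel₀ hγ, one_smul]
    _ = (1 - γ)⁻¹ • 1 := by
        rw [← h, mulVec_mulVec, nonsing_inv_mul _ (isUnit_det_one_sub_smul hM hγ0 hγ1),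
          one_mulVec]

end Matrix

section Occupancy

variable {X : Type*} [Fintype X] [DecidableEq X] {γ : ℝ} {M : Matrix X X ℝ}

noncomputable def discountedOccupancy (γ : ℝ) (M : Matrix X X ℝ) (μ : X → ℝ) : X → ℝ :=
  (1 - γ) • (μ ᵥ* (1 - γ • M)⁻¹)

theorem discountedOccupancy_nonneg (hM : M ∈ rowStochastic ℝ X) (hγ0 : 0 ≤ γ) (hγ1 : γ < 1)
    {μ : X → ℝ} (hμ : 0 ≤ μ) : 0 ≤ discountedOccupancy γ M μ := fun x =>
  mul_nonneg (by linarith) <|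
    sum_nonneg fun y _ => mul_nonneg (hμ y) (inv_one_sub_smul_nonneg hM hγ0 hγ1 y x)

theorem dotProduct_inv_one_sub_smul_mulVec (hγ1 : γ ≠ 1) (μ v : X → ℝ) :
    μ ⬝ᵥ ((1 - γ • M)⁻¹ *ᵥ v) = (1 - γ)⁻¹ * (discountedOccupancy γ M μ ⬝ᵥ v) := by
  rw [discountedOccupancy, smul_dotProduct, ← dotProduct_mulVec, smul_eq_mul,
    inv_mul_cancel_left₀ (sub_ne_zero.2 hγ1.symm)]

theorem sum_discountedOccupancy (hM : M ∈ rowStochastic ℝ X) (hγ0 : 0 ≤ γ) (hγ1 : γ < 1)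
    (μ : X → ℝ) : ∑ x, discountedOccupancy γ M μ x = ∑ x, μ x := by
  have h := dotProduct_inv_one_sub_smul_mulVec (M := M) hγ1.ne μ 1
  rw [inv_one_sub_smul_mulVec_one hM hγ0 hγ1, dotProduct_smul, smul_eq_mul,
    mul_right_inj' (inv_ne_zero (by linarith))] at h
  simpa only [dotProduct_one] using h.symm

end Occupancy

theorem sum_mul_sub_div_mix_pos {X : Type*} [Fintype X] {ρ d : X → ℝ} {f : ℝ} (hf0 : 0 < f)
    (hf1 : f ≤ 1) (hρ : 0 ≤ ρ) (hd : ∀ x, 0 < d x) (hsum : ∑ x, ρ x = ∑ x, d x)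
    (hne : ρ ≠ d) : 0 < ∑ x, ρ x * ((ρ x - d x) / (f * d x + (1 - f) * ρ x)) := by
  have hD : ∀ x, 0 < f * d x + (1 - f) * ρ x := fun x =>
    add_pos_of_pos_of_nonneg (mul_pos hf0 (hd x)) (mul_nonneg (sub_nonneg.2 hf1) (hρ x))
  have hsplit : ∀ x, ρ x * ((ρ x - d x) / (f * d x + (1 - f) * ρ x)) =
      (ρ x - d x) + f * (ρ x - d x) ^ 2 / (f * d x + (1 - f) * ρ x) := by
    intro x
    rw [← mul_div_assoc, add_div' _ _ _ (hD x).ne', div_left_inj' (hD x).ne']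
    ring
  rw [sum_congr rfl fun x _ => hsplit x, sum_add_distrib, sum_sub_distrib, hsum, sub_self,
    zero_add]
  obtain ⟨x₀, hx₀⟩ := Function.ne_iff.1 hne
  have hx₀_pos : 0 < f * (ρ x₀ - d x₀) ^ 2 / (f * d x₀ + (1 - f) * ρ x₀) :=
    div_pos (mul_pos hf0 (pow_two_pos_of_ne_zero (sub_ne_zero.2 hx₀))) (hD x₀)
  exact sum_pos' (fun x _ => div_nonneg (mul_nonneg hf0.le (sq_nonneg _)) (hD x).le)
    ⟨x₀, mem_univ x₀, hx₀_pos⟩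

theorem exists_nonneg_forall_ge_sub_mul_le (A B : ℝ) {C : ℝ} (hC : 0 < C) :
    ∃ β₀ : ℝ, 0 ≤ β₀ ∧ ∀ β ≥ β₀, A - β * C ≤ B := by
  refine ⟨max 0 ((A - B) / C), le_max_left _ _, fun β hβ => ?_⟩
  have h := (le_max_right _ _).trans hβ
  rw [div_le_iff₀ hC] at h
  linarith

theorem combo_expected_lower_bound_large_beta_general {X : Type*}
    [Fintype X] [DecidableEq X]
    (γ : ℝ) (hγ0 : 0 < γ) (hγ1 : γ < 1)
    (P Pbar Phat : Matrix X X ℝ)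
    (hPbar0 : ∀ x y, 0 ≤ Pbar x y) (hPbar1 : ∀ x, ∑ y, Pbar x y = 1)
    (hPhat0 : ∀ x y, 0 ≤ Phat x y) (hPhat1 : ∀ x, ∑ y, Phat x y = 1)
    (r : X → ℝ)
    (f : ℝ) (hf0 : 0 < f) (hf1 : f ≤ 1)
    (μ : X → ℝ) (hμ0 : ∀ x, 0 < μ x) (hμ1 : ∑ x, μ x = 1)
    (d : X → ℝ) (hd0 : ∀ x, 0 < d x) (hd1 : ∑ x, d x = 1)
    (Pf : Matrix X X ℝ) (hPf : Pf = f • Pbar + (1 - f) • Phat)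
    (rf : X → ℝ)
    (ρ : X → ℝ) (hρ : ∀ x, ρ x = (1 - γ) * ∑ y, μ y * (1 - γ • Pf)⁻¹ y x)
    (df : X → ℝ) (hdf : ∀ x, df x = f * d x + (1 - f) * ρ x)
    (c : X → ℝ) (hc : ∀ x, c x = (ρ x - d x) / df x)
    (hne : ρ ≠ d) :
    ∃ β₀ : ℝ, 0 ≤ β₀ ∧ ∀ β ≥ β₀,
      (∑ x, μ x * ((1 - γ • Pf)⁻¹ *ᵥ fun y => rf y - β * c y) x) ≤
        ∑ x, μ x * ((1 - γ • P)⁻¹ *ᵥ r) x := by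
  have hPf_mem : Pf ∈ rowStochastic ℝ X := hPf ▸ convex_rowStochastic
    (mem_rowStochastic_iff_sum.2 ⟨hPbar0, hPbar1⟩) (mem_rowStochastic_iff_sum.2 ⟨hPhat0, hPhat1⟩)
    hf0.le (sub_nonneg.2 hf1) (add_sub_cancel f 1)
  have hρ_occ : ρ = discountedOccupancy γ Pf μ := funext hρ
  have hρc : 0 < ρ ⬝ᵥ c := by
    simp only [dotProduct, hc, hdf]
    refine sum_mul_sub_div_mix_pos hf0 hf1 ?_ hd0 ?_ hne
    · exact hρ_occ ▸ discountedOccupancy_nonneg hPf_mem hγ0.le hγ1 fun x => (hμ0 x).le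
    · rw [hρ_occ, sum_discountedOccupancy hPf_mem hγ0.le hγ1, hμ1, hd1]
  obtain ⟨β₀, hβ₀, hle⟩ := exists_nonneg_forall_ge_sub_mul_le
    (μ ⬝ᵥ ((1 - γ • Pf)⁻¹ *ᵥ rf)) (μ ⬝ᵥ ((1 - γ • P)⁻¹ *ᵥ r))
    (mul_pos (inv_pos.2 (sub_pos.2 hγ1)) hρc)
  refine ⟨β₀, hβ₀, fun β hβ => ?_⟩
  have hsplit : μ ⬝ᵥ ((1 - γ • Pf)⁻¹ *ᵥ (rf - β • c)) =
      μ ⬝ᵥ ((1 - γ • Pf)⁻¹ *ᵥ rf) - β * ((1 - γ)⁻¹ * ρ ⬝ᵥ c) := by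
    rw [mulVec_sub, mulVec_smul, dotProduct_sub, dotProduct_smul,
      dotProduct_inv_one_sub_smul_mulVec hγ1.ne μ c, hρ_occ, smul_eq_mul]
  exact hsplit.trans_le (hle β hβ)

theorem combo_expected_lower_bound_large_beta {X : Type*}
    [Fintype X] [Nonempty X] [DecidableEq X]
    (γ : ℝ) (hγ0 : 0 < γ) (hγ1 : γ < 1)
    (P Pbar Phat : Matrix X X ℝ)
    (hP0 : ∀ x y, 0 ≤ P x y) (hP1 : ∀ x, ∑ y, P x y = 1)
    (hPbar0 : ∀ x y, 0 ≤ Pbar x y) (hPbar1 : ∀ x, ∑ y, Pbar x y = 1)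
    (hPhat0 : ∀ x y, 0 ≤ Phat x y) (hPhat1 : ∀ x, ∑ y, Phat x y = 1)
    (r rbar rhat : X → ℝ)
    (f : ℝ) (hf0 : 0 < f) (hf1 : f ≤ 1)
    (μ : X → ℝ) (hμ0 : ∀ x, 0 < μ x) (hμ1 : ∑ x, μ x = 1)
    (d : X → ℝ) (hd0 : ∀ x, 0 < d x) (hd1 : ∑ x, d x = 1)
    (Pf : Matrix X X ℝ) (hPf : Pf = f • Pbar + (1 - f) • Phat)
    (rf : X → ℝ) (hrf : ∀ x, rf x = f * rbar x + (1 - f) * rhat x)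
    (ρ : X → ℝ) (hρ : ∀ x, ρ x = (1 - γ) * ∑ y, μ y * (1 - γ • Pf)⁻¹ y x)
    (df : X → ℝ) (hdf : ∀ x, df x = f * d x + (1 - f) * ρ x)
    (c : X → ℝ) (hc : ∀ x, c x = (ρ x - d x) / df x)
    (hne : ρ ≠ d) :
    ∃ β₀ : ℝ, 0 ≤ β₀ ∧ ∀ β ≥ β₀,
      (∑ x, μ x * ((1 - γ • Pf)⁻¹ *ᵥ fun y => rf y - β * c y) x) ≤
        ∑ x, μ x * ((1 - γ • P)⁻¹ *ᵥ r) x :=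
  combo_expected_lower_bound_large_beta_general γ hγ0 hγ1 P Pbar Phat hPbar0 hPbar1 hPhat0 hPhat1 r
    f hf0 hf1 μ hμ0 hμ1 d hd0 hd1 Pf hPf rf ρ hρ df hdf c hc hne
end

section
/- (Proposition 2: COMBO is less conservative than CQL under condition (*).) Let S and A be finite nonempty types. Let π, π_β : S → A → ℝ be policies with π(a|s) ≥ 0, Σ_a π(a|s) = 1, π_β(a|s) > 0, and Σ_a π_β(a|s) = 1 for all s. Let d̄ : S → ℝ be a probability mass function with d̄(s) > 0 for all s (the dataset state distribution), let ρ_S : S → ℝ be a probability mass function (the model-rollout state distribution), let β ≥ 0, and let Q : S×A → ℝ be arbitrary. Define Q̂_COMBO(s,a) = Q(s,a) − β·(ρ_S(s)·π(a|s) − d̄(s)·π_β(a|s))/(d̄(s)·π_β(a|s)) and Q̂_CQL(s,a) = Q(s,a) − β·(π(a|s) − π_β(a|s))/π_β(a|s). If Σ_{s,a} ρ_S(s)·π(a|s)·(π(a|s)/π_β(a|s)) − Σ_{s,a} d̄(s)·π(a|s)·(π(a|s)/π_β(a|s)) ≤ 0, then Σ_{s,a} d̄(s)·π(a|s)·Q̂_COMBO(s,a)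 ≥ Σ_{s,a} d̄(s)·π(a|s)·Q̂_CQL(s,a). -/
/-!
Both penalties are affine in the same ratio `π / π_β`: weighted by `d̄ · π`, the COMBO
Q-value exceeds the CQL one by exactly `β · (d̄ - ρ_S) · π · π / π_β`, since the `-1`
terms of the two penalties cancel. Summing, the gap is `β` times the negative of the
left-hand side of condition (*), hence nonnegative.
-/

lemma weighted_combo_eq_weighted_cql_add {d ρ p pβ q β : ℝ} (hd : d ≠ 0) (hpβ : pβ ≠ 0) :
    d * p * (q - β * (ρ * p - d * pβ) / (d * pβ)) =
      d * p * (q - β * (p - pβ) / pβ) + β * (d * p * (p / pβ) - ρ * p * (p / pβ)) := by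
  field_simp
  ring

theorem combo_less_conservative_than_cql_general {S A : Type*}
    [Fintype S] [Fintype A]
    (π πβ : S → A → ℝ)
    (hπβ0 : ∀ s a, 0 < πβ s a)
    (dbar : S → ℝ) (hdbar0 : ∀ s, 0 < dbar s)
    (ρS : S → ℝ)
    (β : ℝ) (hβ : 0 ≤ β) (Q : S × A → ℝ)
    (QCOMBO QCQL : S × A → ℝ)
    (hQCOMBO : ∀ s a, QCOMBO (s, a) =
      Q (s, a) - β * (ρS s * π s a - dbar s * πβ s a) / (dbar s * πβ s a))
    (hQCQL : ∀ s a, QCQL (s, a) = Q (s, a) - β * (π s a - πβ s a) / πβ s a)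
    (hcond : (∑ s, ∑ a, ρS s * π s a * (π s a / πβ s a)) -
      (∑ s, ∑ a, dbar s * π s a * (π s a / πβ s a)) ≤ 0) :
    (∑ s, ∑ a, dbar s * π s a * QCOMBO (s, a)) ≥
      ∑ s, ∑ a, dbar s * π s a * QCQL (s, a) := by
  have gap : ∀ s a, dbar s * π s a * QCOMBO (s, a) = dbar s * π s a * QCQL (s, a) +
      β * (dbar s * π s a * (π s a / πβ s a) - ρS s * π s a * (π s a / πβ s a)) := by
    intro s a
    rw [hQCOMBO, hQCQL]
    exact weighted_combo_eq_weighted_cql_add (hdbar0 s).ne' (hπβ0 s a).ne'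
  simp_rw [gap, Finset.sum_add_distrib, ← Finset.mul_sum, Finset.sum_sub_distrib]
  exact le_add_of_nonneg_right (mul_nonneg hβ (by linarith))

theorem combo_less_conservative_than_cql {S A : Type*}
    [Fintype S] [Fintype A] [Nonempty S] [Nonempty A]
    (π πβ : S → A → ℝ)
    (hπ0 : ∀ s a, 0 ≤ π s a) (hπ1 : ∀ s, ∑ a, π s a = 1)
    (hπβ0 : ∀ s a, 0 < πβ s a) (hπβ1 : ∀ s, ∑ a, πβ s a = 1)
    (dbar : S → ℝ) (hdbar0 : ∀ s, 0 < dbar s) (hdbar1 : ∑ s, dbar s = 1)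
    (ρS : S → ℝ) (hρS0 : ∀ s, 0 ≤ ρS s) (hρS1 : ∑ s, ρS s = 1)
    (β : ℝ) (hβ : 0 ≤ β) (Q : S × A → ℝ)
    (QCOMBO QCQL : S × A → ℝ)
    (hQCOMBO : ∀ s a, QCOMBO (s, a) =
      Q (s, a) - β * (ρS s * π s a - dbar s * πβ s a) / (dbar s * πβ s a))
    (hQCQL : ∀ s a, QCQL (s, a) = Q (s, a) - β * (π s a - πβ s a) / πβ s a)
    (hcond : (∑ s, ∑ a, ρS s * π s a * (π s a / πβ s a)) -
      (∑ s, ∑ a, dbar s * π s a * (π s a / πβ s a)) ≤ 0) :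
    (∑ s, ∑ a, dbar s * π s a * QCOMBO (s, a)) ≥
      ∑ s, ∑ a, dbar s * π s a * QCQL (s, a) :=
  combo_less_conservative_than_cql_general π πβ hπβ0 dbar hdbar0 ρS β hβ Q QCOMBO QCQL hQCOMBO hQCQL
    hcond
end
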